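/- Let V be a finite set of atomic propositions partitioned into inputs I and outputs O, and let φ = (φ1 ∧ φ2) → ψ be an LTL formula with prop(φ) = V, prop(φ1) ∩ prop(φ2) = ∅, and prop(φ2) ∩ prop(ψ) = ∅. Assume that the LTL formula ¬φ2 is unrealizable over V and that there exists a counterstrategy for the language of ¬φ2 (so every word compatible with this counterstrategy satisfies φ2). Then φ1 → ψ is realizable over the variables V1 = prop(φ1) ∪ prop(ψ) (with inputs I ∩ V1 and outputs O ∩ V1) if and only if φ is realizable over V. -/

import Mathlib

namespace SpecDecomp

variable {α : Type*}

/-- Restriction of an infinite word: intersect each letter with `X`. -/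
def restrict (σ : ℕ → Set α) (X : Set α) : ℕ → Set α := fun n => σ n ∩ X

/-- Restriction of a finite word (history): intersect each letter with `X`. -/
def restrictFin (h : List (Set α)) (X : Set α) : List (Set α) := h.map (· ∩ X)

/-- Letterwise union of infinite words. -/
def wordUnion (σ₁ σ₂ : ℕ → Set α) : ℕ → Set α := fun n => σ₁ n ∪ σ₂ n

/-- The set of infinite words over the alphabet `2^W`. -/
def WordsOver (W : Set α) : Set (ℕ → Set α) := {σ | ∀ n, σ n ⊆ W}

/-- Non-contradictory composition of a language `L₁` over `2^{W₁}` and a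
language `L₂` over `2^{W₂}`. -/
def comp (L₁ : Set (ℕ → Set α)) (W₁ : Set α) (L₂ : Set (ℕ → Set α)) (W₂ : Set α) :
    Set (ℕ → Set α) :=
  {σ | ∃ σ₁ ∈ L₁, ∃ σ₂ ∈ L₂, restrict σ₁ W₂ = restrict σ₂ W₁ ∧ σ = wordUnion σ₁ σ₂}

/-- The finite history consisting of the first `n` letters of `σ`. -/
def hist (σ : ℕ → Set α) (n : ℕ) : List (Set α) := (List.range n).map σ

/-- An infinite word over `2^W` is compatible with the implementation `f`
(for variables `W`, inputs `Iw`, outputs `Ow`). -/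
def CompatibleImpl (W Iw Ow : Set α) (f : List (Set α) → Set α → Set α)
    (σ : ℕ → Set α) : Prop :=
  (∀ n, σ n ⊆ W) ∧ ∀ n, f (hist σ n) (σ n ∩ Iw) = σ n ∩ Ow

/-- The implementation `f` realizes the language `L`. -/
def Realizes (W Iw Ow : Set α) (f : List (Set α) → Set α → Set α)
    (L : Set (ℕ → Set α)) : Prop :=
  ∀ σ, CompatibleImpl W Iw Ow f σ → σ ∈ L

/-- `L` is realizable over variables `W` with inputs `Iw` and outputs `Ow`. -/
def Realizable (W Iw Ow : Set α) (L : Set (ℕ → Set α)) : Prop :=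
  ∃ f : List (Set α) → Set α → Set α,
    (∀ h i, f h i ⊆ Ow) ∧ Realizes W Iw Ow f L

/-- An infinite word over `2^W` is compatible with the counterstrategy `fc`. -/
def CompatibleCounter (W Iw : Set α) (fc : List (Set α) → Set α)
    (σ : ℕ → Set α) : Prop :=
  (∀ n, σ n ⊆ W) ∧ ∀ n, fc (hist σ n) = σ n ∩ Iw

/-- `fc` is a counterstrategy for `L`: every compatible word lies in the
complement of `L`. -/
def Counterstrategy (W Iw : Set α) (fc : List (Set α) → Set α)
    (L : Set (ℕ → Set α)) : Prop :=
  ∀ σ, CompatibleCounter W Iw fc σ → σ ∉ L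

/-- Syntax of linear-time temporal logic. -/
inductive LTL (α : Type*) where
  | atom : α → LTL α
  | tt : LTL α
  | not : LTL α → LTL α
  | or : LTL α → LTL α → LTL α
  | and : LTL α → LTL α → LTL α
  | next : LTL α → LTL α
  | until_ : LTL α → LTL α → LTL α

namespace LTL

/-- The set of atomic propositions occurring in a formula
(`true` contributes no atomic propositions). -/
def props : LTL α → Set α
  | atom a => {a}
  | tt => ∅
  | not φ => props φ
  | or φ ψ => props φ ∪ props ψ
  | and φ ψ => props φ ∪ props ψ
  | next φ => props φ
  | until_ φ ψ => props φ ∪ props ψ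

/-- Satisfaction of an LTL formula at position `n` of the infinite word `σ`. -/
def SatAt (σ : ℕ → Set α) : LTL α → ℕ → Prop
  | atom a, n => a ∈ σ n
  | tt, _ => True
  | not φ, n => ¬ SatAt σ φ n
  | or φ ψ, n => SatAt σ φ n ∨ SatAt σ ψ n
  | and φ ψ, n => SatAt σ φ n ∧ SatAt σ ψ n
  | next φ, n => SatAt σ φ (n + 1)
  | until_ φ ψ, n =>
      ∃ m, n ≤ m ∧ SatAt σ ψ m ∧ ∀ k, n ≤ k → k < m → SatAt σ φ k

/-- `σ ⊨ φ`. -/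
def Sat (σ : ℕ → Set α) (φ : LTL α) : Prop := SatAt σ φ 0

/-- Implication, as the usual abbreviation `φ → ψ ≡ ¬φ ∨ ψ`. -/
def impl (φ ψ : LTL α) : LTL α := or (not φ) ψ

/-- The language of `φ` over the alphabet `2^W`. -/
def LangOver (φ : LTL α) (W : Set α) : Set (ℕ → Set α) :=
  {σ | (∀ n, σ n ⊆ W) ∧ Sat σ φ}

end LTL

/-! Realizability transfers in both directions between `V` and `V₁ = prop(φ₁) ∪ prop(ψ)`.
An implementation for `φ₁ → ψ` over `V₁` is an implementation over `V` that ignores the variables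
outside `V₁`. Conversely, an implementation `f` for `φ` over `V` is run in the smaller game with
the inputs in `V₂ = prop(φ₂)` supplied by the counterstrategy for `¬φ₂`. The counterstrategy reads
the whole history, so it is fed a shadow play which agrees with the real play on `V₂` and in which
all inputs are its own choices. The shadow play satisfies `φ₂`, hence so does the real play, and
there `f` guarantees `φ₁ → ψ`. -/

theorem restrict_restrict (σ : ℕ → Set α) (X : Set α) :
    restrict (restrict σ X) X = restrict σ X :=
  funext fun n => by simp [restrict, Set.inter_assoc]

theorem restrictFin_hist (σ : ℕ → Set α) (X : Set α) (n : ℕ) :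
    restrictFin (hist σ n) X = hist (restrict σ X) n := by
  simp [restrictFin, hist, restrict, Function.comp_def]

theorem hist_succ (σ : ℕ → Set α) (n : ℕ) : hist σ (n + 1) = hist σ n ++ [σ n] := by
  simp [hist, List.range_succ]

theorem union_inter_eq_left_of_disjoint {s t I O : Set α} (hIO : Disjoint I O) (hs : s ⊆ I)
    (ht : t ⊆ O) : (s ∪ t) ∩ I = s := by
  rw [Set.union_inter_distrib_right, Set.inter_eq_left.mpr hs,
    (hIO.mono_right ht).symm.inter_eq, Set.union_empty]

namespace LTL

@[simp]
theorem sat_impl {σ : ℕ → Set α} {φ ψ : LTL α} : (φ.impl ψ).Sat σ ↔ (φ.Sat σ → ψ.Sat σ) :=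
  imp_iff_not_or.symm

@[simp]
theorem sat_and {σ : ℕ → Set α} {φ ψ : LTL α} : (φ.and ψ).Sat σ ↔ φ.Sat σ ∧ ψ.Sat σ :=
  Iff.rfl

theorem satAt_congr {σ σ' : ℕ → Set α} {P : Set α} (h : restrict σ P = restrict σ' P)
    {χ : LTL α} (hχ : χ.props ⊆ P) (n : ℕ) : χ.SatAt σ n ↔ χ.SatAt σ' n := by
  induction χ generalizing n with
  | atom a =>
    have hn : σ n ∩ P = σ' n ∩ P := congrFun h n
    have ha : a ∈ P := hχ rfl
    exact ⟨fun hσ => (hn ▸ ⟨hσ, ha⟩ : a ∈ σ' n ∩ P).1, fun hσ' => (hn ▸ ⟨hσ', ha⟩ : a ∈ σ n ∩ P).1⟩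
  | tt => exact Iff.rfl
  | not φ ih => exact (ih hχ n).not
  | or φ ψ ihφ ihψ =>
    exact or_congr (ihφ (Set.union_subset_iff.mp hχ).1 n) (ihψ (Set.union_subset_iff.mp hχ).2 n)
  | and φ ψ ihφ ihψ =>
    exact and_congr (ihφ (Set.union_subset_iff.mp hχ).1 n) (ihψ (Set.union_subset_iff.mp hχ).2 n)
  | next φ ih => exact ih hχ (n + 1)
  | until_ φ ψ ihφ ihψ =>
    simp only [SatAt, ihφ (Set.union_subset_iff.mp hχ).1, ihψ (Set.union_subset_iff.mp hχ).2]

theorem sat_congr {σ σ' : ℕ → Set α} {P : Set α} (h : restrict σ P = restrict σ' P)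
    {χ : LTL α} (hχ : χ.props ⊆ P) : χ.Sat σ ↔ χ.Sat σ' :=
  satAt_congr h hχ 0

theorem sat_restrict_iff {σ : ℕ → Set α} {P : Set α} {χ : LTL α} (hχ : χ.props ⊆ P) :
    χ.Sat (restrict σ P) ↔ χ.Sat σ :=
  sat_congr (restrict_restrict σ P) hχ

end LTL

theorem Realizable.of_restrict {W W₁ I O : Set α} {L₁ L : Set (ℕ → Set α)}
    (h : Realizable W₁ (I ∩ W₁) (O ∩ W₁) L₁)
    (hL : ∀ σ, (∀ n, σ n ⊆ W) → restrict σ W₁ ∈ L₁ → σ ∈ L) : Realizable W I O L := by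
  obtain ⟨f₁, hf₁O, hf₁⟩ := h
  refine ⟨fun h i => f₁ (restrictFin h W₁) (i ∩ W₁),
    fun h i => (hf₁O _ _).trans Set.inter_subset_left,
    fun σ ⟨hσW, hσf⟩ => hL σ hσW (hf₁ _ ⟨fun n => Set.inter_subset_right, fun n => ?_⟩)⟩
  have hn := hσf n
  simp only [restrictFin_hist] at hn
  have hO : σ n ∩ O ⊆ W₁ := hn ▸ (hf₁O _ _).trans Set.inter_subset_right
  have hI : σ n ∩ W₁ ∩ (I ∩ W₁) = σ n ∩ I ∩ W₁ := by
    ext a; simp only [Set.mem_inter_iff]; tauto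
  have hO' : σ n ∩ W₁ ∩ (O ∩ W₁) = σ n ∩ O := by
    ext a; have := @hO a; simp only [Set.mem_inter_iff] at this ⊢; tauto
  simp only [restrict, hI, hO', hn]

section Simulation

variable (f : List (Set α) → Set α → Set α) (fc : List (Set α) → Set α) (I₁ V₂ : Set α)

/-- The histories of the play of `f` and of the shadow play of `fc` after the environment of the
smaller game has chosen the inputs `x ∩ I₁` for the letters `x` of `h`. -/
def simulate (h : List (Set α)) : List (Set α) × List (Set α) :=
  h.foldl (fun p x =>
    let i := x ∩ I₁ ∪ fc p.2 ∩ V₂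
    (p.1 ++ [i ∪ f p.1 i], p.2 ++ [fc p.2 ∪ f p.1 i])) ([], [])

def simulatedImpl (V₁ : Set α) (h : List (Set α)) (i : Set α) : Set α :=
  f (simulate f fc I₁ V₂ h).1 (i ∪ fc (simulate f fc I₁ V₂ h).2 ∩ V₂) ∩ V₁

end Simulation

theorem exists_plays_of_compatible_simulatedImpl {I O V₁ V₂ : Set α}
    {f : List (Set α) → Set α → Set α} {fc : List (Set α) → Set α} (hIO : Disjoint I O)
    (hV₁ : V₁ ⊆ I ∪ O) (hV₁₂ : Disjoint V₁ V₂) (hfO : ∀ h i, f h i ⊆ O) (hfcI : ∀ h, fc h ⊆ I)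
    {σ₁ : ℕ → Set α}
    (hσ₁ : CompatibleImpl V₁ (I ∩ V₁) (O ∩ V₁) (simulatedImpl f fc (I ∩ V₁) V₂ V₁) σ₁) :
    ∃ σ τ, CompatibleImpl (I ∪ O) I O f σ ∧ CompatibleCounter (I ∪ O) I fc τ ∧
      restrict σ V₁ = σ₁ ∧ restrict σ V₂ = restrict τ V₂ := by
  set p := fun n => simulate f fc (I ∩ V₁) V₂ (hist σ₁ n)
  set i := fun n => σ₁ n ∩ (I ∩ V₁) ∪ fc (p n).2 ∩ V₂ with hi
  set o := fun n => f (p n).1 (i n) with ho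
  obtain ⟨σ, hσ⟩ : ∃ σ : ℕ → Set α, ∀ n, σ n = i n ∪ o n := ⟨_, fun _ => rfl⟩
  obtain ⟨τ, hτ⟩ : ∃ τ : ℕ → Set α, ∀ n, τ n = fc (p n).2 ∪ o n := ⟨_, fun _ => rfl⟩
  have hp : ∀ n, p n = (hist σ n, hist τ n) := by
    intro n
    induction n with
    | zero => rfl
    | succ n ih =>
      have hstep : p (n + 1) = ((p n).1 ++ [σ n], (p n).2 ++ [τ n]) := by
        simp only [hσ, hτ, p, hist_succ, simulate, List.foldl_append, List.foldl_cons,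
          List.foldl_nil]
        rfl
      rw [hstep, ih, hist_succ, hist_succ]
  have hoV₁ : ∀ n, o n ∩ V₁ = σ₁ n ∩ (O ∩ V₁) := hσ₁.2
  have hoO : ∀ n, o n ⊆ O := fun n => hfO _ _
  clear_value o i p
  have hiI : ∀ n, i n ⊆ I := fun n => by
    rw [hi]
    exact Set.union_subset (Set.inter_subset_right.trans Set.inter_subset_left)
      (Set.inter_subset_left.trans (hfcI _))
  have hV₁₂' : ∀ a, a ∈ V₁ → a ∉ V₂ := fun a h => Set.disjoint_left.mp hV₁₂ h
  refine ⟨σ, τ, ⟨fun n => ?_, fun n => ?_⟩, ⟨fun n => ?_, fun n => ?_⟩, funext fun n => ?_,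
    funext fun n => ?_⟩
  · exact hσ n ▸ Set.union_subset_union (hiI n) (hoO n)
  · rw [hσ, union_inter_eq_left_of_disjoint hIO (hiI n) (hoO n), Set.union_comm,
      union_inter_eq_left_of_disjoint hIO.symm (hoO n) (hiI n)]
    simp only [ho, hp]
  · exact hτ n ▸ Set.union_subset_union (hfcI _) (hoO n)
  · rw [hτ, union_inter_eq_left_of_disjoint hIO (hfcI _) (hoO n), hp]
  · ext a
    have hoa := Set.ext_iff.mp (hoV₁ n) a
    have hV₁a := @hV₁ a
    have hσ₁a := @hσ₁.1 n a
    have hV₁₂a := hV₁₂' a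
    simp only [restrict, hσ, hi, Set.mem_inter_iff, Set.mem_union] at hoa hV₁a ⊢
    tauto
  · ext a
    have hV₁₂a := hV₁₂' a
    simp only [restrict, hσ, hτ, hi, Set.mem_inter_iff, Set.mem_union]
    tauto

theorem assumption_dropping_general
    (V I O : Set α) (hpart : I ∪ O = V) (hIO : I ∩ O = ∅)
    (φ₁ φ₂ ψ : LTL α)
    (hV : ((φ₁.and φ₂).impl ψ).props = V)
    (h₁₂ : φ₁.props ∩ φ₂.props = ∅)
    (h₂ψ : φ₂.props ∩ ψ.props = ∅)
    (hcs : ∃ fc : List (Set α) → Set α, (∀ h, fc h ⊆ I) ∧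
      Counterstrategy V I fc ((LTL.not φ₂).LangOver V)) :
    Realizable (φ₁.props ∪ ψ.props) (I ∩ (φ₁.props ∪ ψ.props))
        (O ∩ (φ₁.props ∪ ψ.props)) ((φ₁.impl ψ).LangOver (φ₁.props ∪ ψ.props)) ↔
      Realizable V I O (((φ₁.and φ₂).impl ψ).LangOver V) := by
  obtain ⟨fc, hfcI, hfc⟩ := hcs
  subst hpart
  set V₁ := φ₁.props ∪ ψ.props
  have hV₁ : V₁ ⊆ I ∪ O := hV ▸ Set.union_subset_union_left ψ.props Set.subset_union_left
  have hV₁₂ : Disjoint V₁ φ₂.props := Set.disjoint_union_left.mpr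
    ⟨Set.disjoint_iff_inter_eq_empty.mpr h₁₂, (Set.disjoint_iff_inter_eq_empty.mpr h₂ψ).symm⟩
  have hsat₁ (σ : ℕ → Set α) : (φ₁.impl ψ).Sat (restrict σ V₁) ↔ (φ₁.impl ψ).Sat σ :=
    LTL.sat_restrict_iff subset_rfl
  constructor
  · refine fun h => h.of_restrict fun σ hσ hσ₁ => ⟨hσ, ?_⟩
    have hσψ := (hsat₁ σ).1 hσ₁.2
    simp only [LTL.sat_impl, LTL.sat_and] at hσψ ⊢
    exact fun h => hσψ h.1
  · rintro ⟨f, hfO, hf⟩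
    refine ⟨simulatedImpl f fc (I ∩ V₁) φ₂.props V₁,
      fun h i => Set.inter_subset_inter_left _ (hfO _ _), fun σ₁ hσ₁ => ⟨hσ₁.1, ?_⟩⟩
    obtain ⟨σ, τ, hσ, hτ, hσσ₁, hστ⟩ :=
      exists_plays_of_compatible_simulatedImpl (Set.disjoint_iff_inter_eq_empty.mpr hIO) hV₁ hV₁₂
        hfO hfcI hσ₁
    have hτφ₂ : φ₂.Sat τ := by_contra fun h => hfc τ hτ ⟨hτ.1, h⟩
    have hσφ₂ : φ₂.Sat σ := (LTL.sat_congr hστ subset_rfl).2 hτφ₂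
    have hσφ := (hf σ hσ).2
    rw [← hσσ₁, hsat₁]
    simp only [LTL.sat_impl, LTL.sat_and] at hσφ ⊢
    exact fun h => hσφ ⟨h, hσφ₂⟩

/-- dropping an assumption `φ₂` that shares no variables with
`φ₁` and `ψ` and whose negation is unrealizable preserves equirealizability. -/
theorem assumption_dropping
    (V I O : Set α) (hVfin : V.Finite) (hpart : I ∪ O = V) (hIO : I ∩ O = ∅)
    (φ₁ φ₂ ψ : LTL α)
    (hV : ((φ₁.and φ₂).impl ψ).props = V)
    (h₁₂ : φ₁.props ∩ φ₂.props = ∅)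
    (h₂ψ : φ₂.props ∩ ψ.props = ∅)
    (hunreal : ¬ Realizable V I O ((LTL.not φ₂).LangOver V))
    (hcs : ∃ fc : List (Set α) → Set α, (∀ h, fc h ⊆ I) ∧
      Counterstrategy V I fc ((LTL.not φ₂).LangOver V)) :
    Realizable (φ₁.props ∪ ψ.props) (I ∩ (φ₁.props ∪ ψ.props))
        (O ∩ (φ₁.props ∪ ψ.props)) ((φ₁.impl ψ).LangOver (φ₁.props ∪ ψ.props)) ↔
      Realizable V I O (((φ₁.and φ₂).impl ψ).LangOver V) :=
  assumption_dropping_general V I O hpart hIO φ₁ φ₂ ψ hV h₁₂ h₂ψ hcs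

end SpecDecomp
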